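/- Let d > 2, A_d = (1,…,1) ∈ ℤ^{1×d}, and 𝓜_d = { e_1 − e_k : 2 ≤ k ≤ d }. Then for every i ∈ ℕ, the diameter of the fiber graph 𝓕_{A_d,i}(𝓜_d) equals 2i: any two u, v ∈ 𝓕_{A_d,i} are at graph distance at most ‖u − v‖_1, and the maximum ℓ_1-distance between two elements of 𝓕_{A_d,i} is 2i, achieved and tight. -/

import Mathlib

/-- One step of the fiber walk on `F` using moves `±Mset`. -/
def stepRel (d : ℕ) (F Mset : Set (Fin d → ℤ)) (x y : Fin d → ℤ) : Prop :=
  x ∈ F ∧ y ∈ F ∧ (y - x ∈ Mset ∨ x - y ∈ Mset)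

/-- Graph distance in the fiber graph on `F` with moves `±Mset`. -/
noncomputable def walkDist (d : ℕ) (F Mset : Set (Fin d → ℤ)) (u v : Fin d → ℤ) : ℕ :=
  sInf {n : ℕ | ∃ f : ℕ → (Fin d → ℤ), f 0 = u ∧ f n = v ∧
    ∀ t < n, stepRel d F Mset (f t) (f (t + 1))}

/-- Diameter of the fiber graph on `F` with moves `±Mset`. -/
noncomputable def walkDiam (d : ℕ) (F Mset : Set (Fin d → ℤ)) : ℕ :=
  sSup {n : ℕ | ∃ u ∈ F, ∃ v ∈ F, n = walkDist d F Mset u v}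

/-!
Write `z` for the pivot coordinate, so that the moves are `±(e_z - e_k)`. The graph distance is at
most the ℓ¹-distance: if `u ≠ v` lie in the same fiber, some coordinate `a` has `u a > v a` and some
`b` has `u b < v b`; moving one unit from `a` to `b` lowers the ℓ¹-distance by `2` and takes at most
two moves, `a → z → b`. Within the fiber the ℓ¹-distance is at most `2i`. Conversely, for distinct
coordinates `p, q ≠ z` every move changes `x p - x q` by at most one, so the walk from `i e_p` to
`i e_q` needs at least `2i` moves.
-/

open Finset

section Walks

variable {d : ℕ} {F M : Set (Fin d → ℤ)}

-- `walkDist d F M u v` is the least `n` with `HasWalk F M n u v`.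
def HasWalk (F M : Set (Fin d → ℤ)) (n : ℕ) (u v : Fin d → ℤ) : Prop :=
  ∃ f : ℕ → (Fin d → ℤ), f 0 = u ∧ f n = v ∧ ∀ t < n, stepRel d F M (f t) (f (t + 1))

theorem HasWalk.refl (u : Fin d → ℤ) : HasWalk F M 0 u u :=
  ⟨fun _ => u, rfl, rfl, fun _ ht => absurd ht (Nat.not_lt_zero _)⟩

theorem HasWalk.eq_of_zero {u v : Fin d → ℤ} (h : HasWalk F M 0 u v) : u = v := by
  obtain ⟨f, h0, hn, -⟩ := h
  rw [← h0, hn]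

theorem HasWalk.cons {n : ℕ} {u w v : Fin d → ℤ} (huw : stepRel d F M u w)
    (h : HasWalk F M n w v) : HasWalk F M (n + 1) u v := by
  obtain ⟨f, h0, hn, hs⟩ := h
  refine ⟨fun t => if t = 0 then u else f (t - 1), rfl, by simpa using hn, ?_⟩
  rintro (_ | t) ht
  · simpa [h0] using huw
  · simpa using hs t (by omega)

theorem HasWalk.exists_step {n : ℕ} {u v : Fin d → ℤ} (h : HasWalk F M (n + 1) u v) :
    ∃ w, stepRel d F M u w ∧ HasWalk F M n w v := by
  obtain ⟨f, h0, hn, hs⟩ := h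
  exact ⟨f 1, h0 ▸ hs 0 n.succ_pos, fun t => f (t + 1), rfl, hn, fun t ht => hs (t + 1) (by omega)⟩

theorem HasWalk.single {u v : Fin d → ℤ} (h : stepRel d F M u v) : HasWalk F M 1 u v :=
  (HasWalk.refl v).cons h

theorem HasWalk.trans {m n : ℕ} {u v w : Fin d → ℤ} (huv : HasWalk F M m u v)
    (hvw : HasWalk F M n v w) : HasWalk F M (m + n) u w := by
  induction m generalizing u with
  | zero => simpa [huv.eq_of_zero] using hvw
  | succ m ih =>
    obtain ⟨u', hstep, hrest⟩ := huv.exists_step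
    simpa [Nat.add_right_comm] using (ih hrest).cons hstep

theorem HasWalk.natAbs_sub_le (φ : (Fin d → ℤ) → ℤ)
    (hφ : ∀ x y, stepRel d F M x y → (φ y - φ x).natAbs ≤ 1) {n : ℕ} {u v : Fin d → ℤ}
    (h : HasWalk F M n u v) : (φ v - φ u).natAbs ≤ n := by
  induction n generalizing u with
  | zero => simp [h.eq_of_zero]
  | succ n ih =>
    obtain ⟨w, hstep, hrest⟩ := h.exists_step
    have := hφ u w hstep
    have := ih hrest
    omega

theorem walkDist_le {n : ℕ} {u v : Fin d → ℤ} (h : HasWalk F M n u v) :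
    walkDist d F M u v ≤ n :=
  Nat.sInf_le h

theorem hasWalk_walkDist {n : ℕ} {u v : Fin d → ℤ} (h : HasWalk F M n u v) :
    HasWalk F M (walkDist d F M u v) u v :=
  Nat.sInf_mem (s := {n | HasWalk F M n u v}) ⟨n, h⟩

theorem walkDiam_eq {D : ℕ} (hle : ∀ u ∈ F, ∀ v ∈ F, walkDist d F M u v ≤ D)
    (hex : ∃ u ∈ F, ∃ v ∈ F, walkDist d F M u v = D) : walkDiam d F M = D := by
  obtain ⟨u, hu, v, hv, huv⟩ := hex
  have hbdd : ∀ n ∈ {n : ℕ | ∃ u ∈ F, ∃ v ∈ F, n = walkDist d F M u v}, n ≤ D := by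
    rintro n ⟨u, hu, v, hv, rfl⟩
    exact hle u hu v hv
  exact le_antisymm (csSup_le ⟨_, u, hu, v, hv, rfl⟩ hbdd)
    (le_csSup ⟨D, hbdd⟩ ⟨u, hu, v, hv, huv.symm⟩)

end Walks

theorem exists_lt_of_sum_eq_of_ne {ι M : Type*} [Fintype ι] [AddCommMonoid M] [LinearOrder M]
    [IsOrderedCancelAddMonoid M] {x v : ι → M} (hsum : ∑ j, x j = ∑ j, v j) (hne : x ≠ v) :
    ∃ a, v a < x a := by
  by_contra! hle
  exact hne (funext ((Finset.sum_eq_sum_iff_of_le fun j _ => hle j).mp hsum · (mem_univ _)))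

def fiber (d i : ℕ) : Set (Fin d → ℤ) :=
  {u | (∀ j, 0 ≤ u j) ∧ ∑ j, u j = i}

def moves {d : ℕ} (z : Fin d) : Set (Fin d → ℤ) :=
  {m | ∃ k ≠ z, m = Pi.single z 1 - Pi.single k 1}

section Fiber

variable {d i : ℕ}

theorem single_mem_fiber (p : Fin d) : Pi.single p (i : ℤ) ∈ fiber d i := by
  refine ⟨fun j => ?_, by simp⟩
  rcases eq_or_ne j p with rfl | h <;> simp [*]

theorem transfer_mem_fiber {x : Fin d → ℤ} (hx : x ∈ fiber d i) {a : Fin d} (ha : 1 ≤ x a)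
    (b : Fin d) : x + Pi.single b 1 - Pi.single a 1 ∈ fiber d i := by
  refine ⟨fun j => ?_, ?_⟩
  · have := hx.1 j
    simp only [Pi.add_apply, Pi.sub_apply, Pi.single_apply]
    split_ifs <;> subst_vars <;> omega
  · simp [sum_add_distrib, sum_sub_distrib, hx.2]

theorem l1_transfer_add_two {x v : Fin d → ℤ} {a b : Fin d} (ha : v a < x a) (hb : x b < v b) :
    ∑ j, ((x + Pi.single b 1 - Pi.single a 1 : Fin d → ℤ) j - v j).natAbs + 2 =
      ∑ j, (x j - v j).natAbs := by
  have hab : a ≠ b := by rintro rfl; omega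
  have hpt : ∀ j, ((x + Pi.single b 1 - Pi.single a 1 : Fin d → ℤ) j - v j).natAbs
      + ((Pi.single a 1 : Fin d → ℕ) j + (Pi.single b 1 : Fin d → ℕ) j) = (x j - v j).natAbs := by
    intro j
    simp only [Pi.add_apply, Pi.sub_apply, Pi.single_apply]
    split_ifs <;> subst_vars <;> omega
  simp only [← Finset.sum_congr rfl fun j _ => hpt j, sum_add_distrib, Finset.sum_pi_single']
  simp

theorem l1_le_two_mul {u v : Fin d → ℤ} (hu : u ∈ fiber d i) (hv : v ∈ fiber d i) :
    ∑ j, (u j - v j).natAbs ≤ 2 * i := by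
  have key : ∑ j, ((u j - v j).natAbs : ℤ) ≤ ∑ j, (u j + v j) :=
    sum_le_sum fun j _ => by have := hu.1 j; have := hv.1 j; omega
  rw [sum_add_distrib, hu.2, hv.2] at key
  rw [two_mul]
  exact_mod_cast key

end Fiber

section Moves

variable {d i : ℕ} {z : Fin d}

theorem stepRel_transfer {x : Fin d → ℤ} (hx : x ∈ fiber d i) {a b : Fin d} (hab : a ≠ b)
    (ha : 1 ≤ x a) (hz : a = z ∨ b = z) :
    stepRel d (fiber d i) (moves z) x (x + Pi.single b 1 - Pi.single a 1) := by
  refine ⟨hx, transfer_mem_fiber hx ha b, ?_⟩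
  rcases hz with rfl | rfl
  · exact .inr ⟨b, hab.symm, by abel⟩
  · exact .inl ⟨a, hab, by abel⟩

theorem hasWalk_transfer {x : Fin d → ℤ} (hx : x ∈ fiber d i) {a b : Fin d} (hab : a ≠ b)
    (ha : 1 ≤ x a) :
    ∃ k ≤ 2, HasWalk (fiber d i) (moves z) k x (x + Pi.single b 1 - Pi.single a 1) := by
  by_cases hz : a = z ∨ b = z
  · exact ⟨1, by norm_num, .single (stepRel_transfer hx hab ha hz)⟩
  rw [not_or] at hz
  set y := x + Pi.single z 1 - Pi.single a 1 with hy
  have hyz : 1 ≤ y z := by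
    have := hx.1 z
    simp only [y, Pi.sub_apply, Pi.add_apply, Pi.single_eq_same, Pi.single_eq_of_ne (Ne.symm hz.1)]
    omega
  have hxy := stepRel_transfer hx hz.1 ha (.inr rfl)
  have hyb := stepRel_transfer (transfer_mem_fiber hx ha z) (Ne.symm hz.2) hyz (.inl rfl)
  have hend : y + Pi.single b 1 - Pi.single z 1 = x + Pi.single b 1 - Pi.single a 1 := by
    rw [hy]; abel
  exact ⟨2, le_rfl, hend ▸ (HasWalk.single hyb).cons hxy⟩

theorem exists_hasWalk_le_l1 (z : Fin d) {x v : Fin d → ℤ} (hx : x ∈ fiber d i)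
    (hv : v ∈ fiber d i) :
    ∃ n ≤ ∑ j, (x j - v j).natAbs, HasWalk (fiber d i) (moves z) n x v := by
  induction hN : ∑ j, (x j - v j).natAbs using Nat.strong_induction_on generalizing x with
  | _ N ih =>
  by_cases hxv : x = v
  · exact ⟨0, N.zero_le, hxv ▸ .refl x⟩
  obtain ⟨a, ha⟩ := exists_lt_of_sum_eq_of_ne (hx.2.trans hv.2.symm) hxv
  obtain ⟨b, hb⟩ := exists_lt_of_sum_eq_of_ne (hv.2.trans hx.2.symm) (Ne.symm hxv)
  have hab : a ≠ b := by rintro rfl; omega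
  have ha1 : 1 ≤ x a := by have := hv.1 a; omega
  obtain ⟨k, hk, hxy⟩ := hasWalk_transfer (z := z) hx hab ha1
  have hl1 := l1_transfer_add_two ha hb
  obtain ⟨m, hm, hyv⟩ := ih _ (by omega) (transfer_mem_fiber hx ha1 b) rfl
  exact ⟨k + m, by omega, hxy.trans hyv⟩

theorem walkDist_le_l1 (z : Fin d) {u v : Fin d → ℤ} (hu : u ∈ fiber d i) (hv : v ∈ fiber d i) :
    walkDist d (fiber d i) (moves z) u v ≤ ∑ j, (u j - v j).natAbs :=
  let ⟨_, hn, h⟩ := exists_hasWalk_le_l1 z hu hv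
  (walkDist_le h).trans hn

theorem natAbs_sub_le_one_of_mem_moves {m : Fin d → ℤ} (hm : m ∈ moves z) {p q : Fin d}
    (hp : p ≠ z) (hq : q ≠ z) : (m p - m q).natAbs ≤ 1 := by
  obtain ⟨k, -, rfl⟩ := hm
  simp only [Pi.sub_apply, Pi.single_apply, hp, hq, if_false]
  split_ifs <;> omega

theorem two_mul_le_walkDist_single {p q : Fin d} (hp : p ≠ z) (hq : q ≠ z) (hpq : p ≠ q) :
    2 * i ≤ walkDist d (fiber d i) (moves z) (Pi.single p (i : ℤ)) (Pi.single q (i : ℤ)) := by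
  obtain ⟨n, -, h⟩ := exists_hasWalk_le_l1 z (single_mem_fiber (i := i) p) (single_mem_fiber q)
  have hφ : ∀ x y, stepRel d (fiber d i) (moves z) x y → (y p - y q - (x p - x q)).natAbs ≤ 1 := by
    rintro x y ⟨-, -, hm | hm⟩ <;>
    · have := natAbs_sub_le_one_of_mem_moves hm hp hq
      simp only [Pi.sub_apply] at this
      omega
  have := (hasWalk_walkDist h).natAbs_sub_le (fun x => x p - x q) hφ
  simp only [Pi.single_eq_same, Pi.single_eq_of_ne hpq, Pi.single_eq_of_ne (Ne.symm hpq)] at this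
  omega

end Moves

/-- For `d > 2` the diameter of `𝓕_{A_d,i}(𝓜_d)` equals `2i`: any two fiber elements are at
graph distance at most their ℓ¹-distance, the maximal ℓ¹-distance in the fiber is `2i`, it is
attained, and the diameter equals `2i`. -/
theorem stmt11 (d : ℕ) (hd : 2 < d) (i : ℕ)
    (F : Set (Fin d → ℤ))
    (hF : F = {u | (∀ j, 0 ≤ u j) ∧ (∑ j, u j) = (i : ℤ)})
    (Mset : Set (Fin d → ℤ))
    (hM : Mset = {v | ∃ k : Fin d, k ≠ ⟨0, by omega⟩ ∧
      v = (fun j => if j = ⟨0, by omega⟩ then 1 else 0) - (fun j => if j = k then 1 else 0)}) :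
    (∀ u ∈ F, ∀ v ∈ F, walkDist d F Mset u v ≤ ∑ j, (u j - v j).natAbs) ∧
    (∀ u ∈ F, ∀ v ∈ F, (∑ j, (u j - v j).natAbs) ≤ 2 * i) ∧
    (∃ u ∈ F, ∃ v ∈ F, (∑ j, (u j - v j).natAbs) = 2 * i) ∧
    walkDiam d F Mset = 2 * i := by
  set z : Fin d := ⟨0, by omega⟩
  have hMz : Mset = moves z := by simp only [hM, moves, ← Pi.single_apply]
  change F = fiber d i at hF
  subst hF hMz
  have hwalk := fun u (hu : u ∈ fiber d i) v (hv : v ∈ fiber d i) => walkDist_le_l1 z hu hv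
  have hl1 := fun u (hu : u ∈ fiber d i) v (hv : v ∈ fiber d i) => l1_le_two_mul hu hv
  obtain ⟨p, q, hp, hq, hpq⟩ : ∃ p q : Fin d, p ≠ z ∧ q ≠ z ∧ p ≠ q :=
    ⟨⟨1, by omega⟩, ⟨2, by omega⟩, by simp [z, Fin.ext_iff]⟩
  have hpF := single_mem_fiber (i := i) p
  have hqF := single_mem_fiber (i := i) q
  have hdist := two_mul_le_walkDist_single (i := i) hp hq hpq
  have := hwalk _ hpF _ hqF
  have := hl1 _ hpF _ hqF
  exact ⟨hwalk, hl1, ⟨_, hpF, _, hqF, by omega⟩,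
    walkDiam_eq (fun u hu v hv => (hwalk u hu v hv).trans (hl1 u hu v hv))
      ⟨_, hpF, _, hqF, by omega⟩⟩
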